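/- arXiv:1608.01359 — 2 statements merged into one kernel-verified Lean document; each statement's English description precedes it below -/
import Mathlib

section
/- Krylov's propagating ink spots lemma (balls). For every integer n ≥ 1 and every η ∈ (0,1) there exist ξ ∈ (0,1) and ζ > 0, depending only on n and η, such that the following holds. Let A ⊆ B₁ be a Lebesgue-measurable set with |A| ≤ η·|B₁|. Let à be the union of all balls B_{ξρ}(x) over pairs (x,ρ) with x ∈ ℝⁿ, ρ > 0, such that B_ρ(x) ⊆ B₁ and |B_ρ(x) ∩ A| ≥ η·|B_ρ(x)|. Then |Ã| ≥ (1+ζ)·|A|. -/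
open MeasureTheory
open scoped ENNReal

/-- The Pucci minimal extremal operator `𝓜⁻(M)` with ellipticity constants `lam ≤ Lam`:
the infimum of `tr(A*M)` over symmetric matrices `A` with `lam•I ≤ A ≤ Lam•I`. -/
noncomputable def pucciMinus (n : ℕ) (lam Lam : ℝ) (M : Matrix (Fin n) (Fin n) ℝ) : ℝ :=
  sInf { t : ℝ | ∃ A : Matrix (Fin n) (Fin n) ℝ, A.IsSymm ∧
    (A - lam • (1 : Matrix (Fin n) (Fin n) ℝ)).PosSemidef ∧
    (Lam • (1 : Matrix (Fin n) (Fin n) ℝ) - A).PosSemidef ∧ t = (A * M).trace }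

/-- The Pucci maximal extremal operator `𝓜⁺(M)`. -/
noncomputable def pucciPlus (n : ℕ) (lam Lam : ℝ) (M : Matrix (Fin n) (Fin n) ℝ) : ℝ :=
  sSup { t : ℝ | ∃ A : Matrix (Fin n) (Fin n) ℝ, A.IsSymm ∧
    (A - lam • (1 : Matrix (Fin n) (Fin n) ℝ)).PosSemidef ∧
    (Lam • (1 : Matrix (Fin n) (Fin n) ℝ) - A).PosSemidef ∧ t = (A * M).trace }

/-- The Hessian matrix `D²u(x)` of `u` at `x`. -/
noncomputable def hess (n : ℕ) (u : EuclideanSpace ℝ (Fin n) → ℝ)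
    (x : EuclideanSpace ℝ (Fin n)) : Matrix (Fin n) (Fin n) ℝ :=
  fun i j => fderiv ℝ (fun y => fderiv ℝ u y (EuclideanSpace.single j (1 : ℝ))) x
    (EuclideanSpace.single i (1 : ℝ))

/-- The euclidean norm `|Du(x)|` of the gradient of `u` at `x`. -/
noncomputable def gradNorm (n : ℕ) (u : EuclideanSpace ℝ (Fin n) → ℝ)
    (x : EuclideanSpace ℝ (Fin n)) : ℝ := ‖fderiv ℝ u x‖

/-- The `L^p` norm `(∫_E |g|^p)^(1/p)`, as a Lebesgue integral valued in `[0,∞]`. -/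
noncomputable def LpNormE (n : ℕ) (p : ℝ) (g : EuclideanSpace ℝ (Fin n) → ℝ)
    (E : Set (EuclideanSpace ℝ (Fin n))) : ℝ≥0∞ :=
  (∫⁻ x in E, ENNReal.ofReal (|g x| ^ p)) ^ (1 / p)

/-- The last (`n`-th) coordinate `x_n` of a point of `ℝⁿ`. -/
def lastC (n : ℕ) (hn : 1 ≤ n) (x : EuclideanSpace ℝ (Fin n)) : ℝ := x ⟨n - 1, by omega⟩

/-- The open half-ball `B_R⁺ = {|x| < R, x_n > 0}`. -/
def halfBall (n : ℕ) (hn : 1 ≤ n) (R : ℝ) : Set (EuclideanSpace ℝ (Fin n)) :=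
  {x | ‖x‖ < R ∧ 0 < lastC n hn x}

/-- The flat boundary part `B_R⁰ = {|x| ≤ R, x_n = 0}`. -/
def flatB (n : ℕ) (hn : 1 ≤ n) (R : ℝ) : Set (EuclideanSpace ℝ (Fin n)) :=
  {x | ‖x‖ ≤ R ∧ lastC n hn x = 0}

/-- The norm `‖g‖_{L^{p,q}(B_R⁺)} = ‖g‖_{L^p(B_R⁺)} + ‖g‖_{L^q(B_R⁺ ∩ {x_n < d0})}`. -/
noncomputable def LpqNormHB (n : ℕ) (hn : 1 ≤ n) (p q d0 R : ℝ)
    (g : EuclideanSpace ℝ (Fin n) → ℝ) : ℝ≥0∞ :=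
  LpNormE n p g (halfBall n hn R) +
    LpNormE n q g {x ∈ halfBall n hn R | lastC n hn x < d0}

/-- The open cube `Q_ρ` of side `ρ` centered at `(0,…,0,ρ/2)`. -/
def cubeQ (n : ℕ) (hn : 1 ≤ n) (ρ : ℝ) : Set (EuclideanSpace ℝ (Fin n)) :=
  {x | (∀ i : Fin n, i.1 ≠ n - 1 → |x i| < ρ / 2) ∧ 0 < lastC n hn x ∧ lastC n hn x < ρ}

/-- The norm `‖g‖_{L^{p,q}(Q₂)} = ‖g‖_{L^p(Q₂)} + ‖g‖_{L^q(Q₂ ∩ {x_n < d0})}`. -/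
noncomputable def LpqNormQ (n : ℕ) (hn : 1 ≤ n) (p q d0 : ℝ)
    (g : EuclideanSpace ℝ (Fin n) → ℝ) : ℝ≥0∞ :=
  LpNormE n p g (cubeQ n hn 2) +
    LpNormE n q g {x ∈ cubeQ n hn 2 | lastC n hn x < d0}

/-!
By Lebesgue's density theorem almost every point `x` of `A` is the centre of a small ball in `B₁`
in which `A` has density at least `η`; in particular `A ⊆ Ã` up to a null set. Growing and sliding
that ball continuously until it becomes `B₁`, where `A` has density at most `η`, the intermediate
value theorem gives a ball `B ∋ x` inside `B₁` in which `A` has density exactly `η`. Vitali's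
covering lemma extracts countably many disjoint such balls `Bᵢ` whose fourfold enlargements cover
almost all of `A`, so `|A| ≤ 4ⁿ ∑ |Bᵢ|`. Choosing `ξ < 1` with `ξⁿ > η`, the shrunk balls `ξBᵢ`
lie in `Ã`, and `ξBᵢ \ A` has measure at least `(ξⁿ - η)|Bᵢ|`; so `Ã \ A` has measure at least
`(ξⁿ - η) 4⁻ⁿ |A|`.
-/

open Metric Set Filter Topology Module

theorem exists_mem_Ioo_lt_pow {η : ℝ} (hη : η < 1) (n : ℕ) : ∃ ξ ∈ Ioo (0 : ℝ) 1, η < ξ ^ n := by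
  have hpow : Tendsto (fun ξ : ℝ => ξ ^ n) (𝓝[<] 1) (𝓝 1) := by
    simpa using ((continuous_pow n).tendsto (1 : ℝ)).mono_left nhdsWithin_le_nhds
  obtain ⟨ξ, hξη, hξ⟩ := ((hpow.eventually (lt_mem_nhds hη)).and (Ioo_mem_nhdsLT one_pos)).exists
  exact ⟨ξ, hξ, hξη⟩

theorem monotone_ball_lineMap {E : Type*} [NormedAddCommGroup E] [NormedSpace ℝ E] {x z : E}
    {ρ R : ℝ} (hxz : dist x z ≤ R - ρ) :
    Monotone fun r => ball (AffineMap.lineMap x z ((r - ρ) / (R - ρ)) : E) r := by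
  intro r r' hrr'
  refine ball_subset_ball' ?_
  rw [dist_lineMap_lineMap]
  rcases (dist_nonneg.trans hxz).eq_or_lt with h0 | h0
  · simp [← h0]
    linarith
  · have hdist : dist ((r - ρ) / (R - ρ)) ((r' - ρ) / (R - ρ)) = (r' - r) / (R - ρ) := by
      rw [Real.dist_eq, ← sub_div, abs_div, abs_of_pos h0, abs_of_nonpos (by linarith)]
      ring
    have := mul_le_mul_of_nonneg_left hxz (div_nonneg (sub_nonneg.2 hrr') h0.le)
    rw [div_mul_cancel₀ _ h0.ne'] at this
    rw [hdist]
    linarith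

theorem continuousOn_measureReal_inter_of_monotone {α : Type*} [MeasurableSpace α]
    {μ : Measure α} {s : ℝ → Set α} {I : Set ℝ} (hs : Monotone s)
    (hmeas : ∀ r, MeasurableSet (s r)) (hfin : ∀ r, μ (s r) ≠ ∞)
    (hcont : ContinuousOn (fun r => μ.real (s r)) I) (A : Set α) :
    ContinuousOn (fun r => μ.real (s r ∩ A)) I := by
  have hdist : ∀ r r', r ≤ r' →
      dist (μ.real (s r ∩ A)) (μ.real (s r' ∩ A)) ≤ dist (μ.real (s r)) (μ.real (s r')) := by
    intro r r' hrr'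
    have hfin' : μ (s r' ∩ A) ≠ ∞ := measure_ne_top_of_subset inter_subset_left (hfin r')
    have hmono : μ.real (s r ∩ A) ≤ μ.real (s r' ∩ A) :=
      measureReal_mono (inter_subset_inter_left _ (hs hrr')) hfin'
    have hgrow : μ.real (s r' ∩ A) ≤ μ.real (s r ∩ A) + μ.real (s r' \ s r) :=
      (measureReal_mono (fun y hy => (em (y ∈ s r)).imp (fun h => ⟨h, hy.2⟩) fun h => ⟨hy.1, h⟩)
        (measure_union_ne_top (measure_ne_top_of_subset inter_subset_left (hfin r))
          (measure_ne_top_of_subset sdiff_subset (hfin r')))).trans (measureReal_union_le _ _)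
    rw [measureReal_sdiff (hs hrr') (hmeas r) (hfin r')] at hgrow
    rw [dist_comm, Real.dist_eq, abs_of_nonneg (by linarith), dist_comm, Real.dist_eq,
      abs_of_nonneg (by linarith)]
    linarith
  refine Metric.continuousOn_iff.2 fun r hr ε hε => ?_
  obtain ⟨δ, hδ, hcontr⟩ := Metric.continuousOn_iff.1 hcont r hr ε hε
  refine ⟨δ, hδ, fun r' hr' hd => (?_ : _ ≤ _).trans_lt (hcontr r' hr' hd)⟩
  rcases le_total r r' with h | h
  · rw [dist_comm, dist_comm (μ.real (s r'))]
    exact hdist r r' h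
  · exact hdist r' r h

section AddHaar

variable {E : Type*} [NormedAddCommGroup E] [MeasurableSpace E] (μ : Measure E)

/-- The set `Ã` of the statement. -/
def inkSpread (η ξ : ℝ) (A : Set E) : Set E :=
  ⋃ (x : E) (ρ : ℝ) (_ : 0 < ρ ∧ ball x ρ ⊆ ball 0 1 ∧
    ENNReal.ofReal η * μ (ball x ρ) ≤ μ (ball x ρ ∩ A)), ball x (ξ * ρ)

variable {μ} in
theorem ball_subset_inkSpread {η ξ ρ : ℝ} {A : Set E} {x : E} (hρ : 0 < ρ)
    (hx : ball x ρ ⊆ ball 0 1) (hdens : ENNReal.ofReal η * μ (ball x ρ) ≤ μ (ball x ρ ∩ A)) :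
    ball x (ξ * ρ) ⊆ inkSpread μ η ξ A :=
  fun _ hw => mem_iUnion₂.2 ⟨x, ρ, mem_iUnion.2 ⟨⟨hρ, hx, hdens⟩, hw⟩⟩

variable [NormedSpace ℝ E] [FiniteDimensional ℝ E] [BorelSpace E] [μ.IsAddHaarMeasure]

theorem ae_eventually_measure_ball_inter_ge {η : ℝ} (hη : η < 1) (A : Set E) :
    ∀ᵐ x ∂μ, x ∈ A → ∀ᶠ ρ in 𝓝[>] 0,
      ENNReal.ofReal η * μ (ball x ρ) ≤ μ (ball x ρ ∩ A) := by
  refine ae_imp_of_ae_restrict ?_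
  filter_upwards [Besicovitch.ae_tendsto_measure_inter_div μ A] with x hx
  filter_upwards [hx.eventually (lt_mem_nhds (ENNReal.ofReal_lt_one.2 hη)),
    self_mem_nhdsWithin] with ρ hρ (hρ0 : 0 < ρ)
  have hball : μ (closedBall x ρ) = μ (ball x ρ) := by
    rw [Measure.addHaar_closedBall μ x hρ0.le, Measure.addHaar_ball_of_pos μ x hρ0]
  have hinter : μ (A ∩ closedBall x ρ) ≤ μ (ball x ρ ∩ A) := calc
    μ (A ∩ closedBall x ρ) ≤ μ ((ball x ρ ∩ A) ∪ sphere x ρ) := by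
      refine measure_mono ?_
      rw [← ball_union_sphere, inter_union_distrib_left, inter_comm]
      exact union_subset_union_right _ inter_subset_right
    _ ≤ μ (ball x ρ ∩ A) + μ (sphere x ρ) := measure_union_le _ _
    _ = μ (ball x ρ ∩ A) := by rw [Measure.addHaar_sphere_of_ne_zero μ x hρ0.ne', add_zero]
  rw [ENNReal.lt_div_iff_mul_lt (Or.inl (measure_closedBall_pos μ x hρ0).ne')
    (Or.inl measure_closedBall_lt_top.ne), hball] at hρ
  exact hρ.le.trans hinter

theorem ae_exists_ball_measure_inter_ge {η : ℝ} (hη : η < 1) {A : Set E} {z : E} {R : ℝ}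
    (hA : A ⊆ ball z R) :
    ∀ᵐ x ∂μ, x ∈ A → ∃ ρ > 0, dist x z ≤ R - ρ ∧
      ENNReal.ofReal η * μ (ball x ρ) ≤ μ (ball x ρ ∩ A) := by
  filter_upwards [ae_eventually_measure_ball_inter_ge μ hη A] with x hx hxA
  obtain ⟨ρ, hdens, hρ⟩ :=
    ((hx hxA).and (Ioo_mem_nhdsGT (sub_pos.2 (mem_ball.1 (hA hxA))))).exists
  exact ⟨ρ, hρ.1, by linarith [hρ.2], hdens⟩

theorem exists_ball_measure_inter_eq {η : ℝ} (hη : 0 ≤ η) (A : Set E) {x z : E} {ρ R : ℝ}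
    (hρ : 0 < ρ) (hxz : dist x z ≤ R - ρ)
    (hx : ENNReal.ofReal η * μ (ball x ρ) ≤ μ (ball x ρ ∩ A))
    (hz : μ (ball z R ∩ A) ≤ ENNReal.ofReal η * μ (ball z R)) :
    ∃ y r, 0 < r ∧ r ≤ R ∧ x ∈ ball y r ∧ ball y r ⊆ ball z R ∧
      μ (ball y r ∩ A) = ENNReal.ofReal η * μ (ball y r) := by
  -- `ball (c r) r` grows continuously from `ball x ρ` at `r = ρ` to `ball z R` at `r = R`.
  set c : ℝ → E := fun r => AffineMap.lineMap x z ((r - ρ) / (R - ρ))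
  have hmono : Monotone fun r => ball (c r) r := monotone_ball_lineMap hxz
  have hρR : ρ ≤ R := by linarith [dist_nonneg (x := x) (y := z)]
  have hcρ : c ρ = x := by simp [c]
  have hcR : c R = z := by
    rcases hρR.eq_or_lt with h | h
    · simpa [c, h] using dist_le_zero.1 (by simpa [h] using hxz)
    · simp [c, (sub_pos.2 h).ne']
  have hfin : ∀ r, ENNReal.ofReal η * μ (ball (c r) r) ≠ ∞ :=
    fun r => ENNReal.mul_ne_top ENNReal.ofReal_ne_top measure_ball_lt_top.ne
  have hvol : ContinuousOn (fun r => μ.real (ball (c r) r)) (Icc ρ R) := by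
    refine ((continuous_pow (finrank ℝ E)).mul
      (continuous_const (y := μ.real (ball (0 : E) 1)))).continuousOn.congr fun r hr => ?_
    rw [measureReal_def, Measure.addHaar_ball_of_pos μ _ (hρ.trans_le hr.1), ENNReal.toReal_mul,
      ENNReal.toReal_ofReal (by have := hρ.trans_le hr.1; positivity)]
    rfl
  set f : ℝ → ℝ := fun r =>
    μ.real (ball (c r) r ∩ A) - (ENNReal.ofReal η * μ (ball (c r) r)).toReal
  have hf : ContinuousOn f (Icc ρ R) := by
    refine (continuousOn_measureReal_inter_of_monotone hmono (fun _ => measurableSet_ball)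
      (fun _ => measure_ball_lt_top.ne) hvol A).sub ?_
    simp only [ENNReal.toReal_mul, ENNReal.toReal_ofReal hη]
    exact continuousOn_const.mul hvol
  have hfρ : 0 ≤ f ρ := by
    rw [sub_nonneg, measureReal_def, hcρ]
    exact ENNReal.toReal_mono (measure_ne_top_of_subset inter_subset_left
      measure_ball_lt_top.ne) hx
  have hfR : f R ≤ 0 := by
    rw [sub_nonpos, measureReal_def, hcR]
    exact ENNReal.toReal_mono (hcR ▸ hfin R) hz
  obtain ⟨r, hr, hfr⟩ := intermediate_value_Icc' hρR hf ⟨hfR, hfρ⟩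
  refine ⟨c r, r, hρ.trans_le hr.1, hr.2, hmono hr.1 (hcρ ▸ mem_ball_self hρ),
    hcR ▸ hmono hr.2, ?_⟩
  exact (ENNReal.toReal_eq_toReal_iff' (measure_ne_top_of_subset inter_subset_left
    measure_ball_lt_top.ne) (hfin r)).1 (sub_eq_zero.1 hfr)

def criticalBalls (η : ℝ) (A : Set E) : Set (E × ℝ) :=
  {p | 0 < p.2 ∧ p.2 ≤ 1 ∧ ball p.1 p.2 ⊆ ball 0 1 ∧
    μ (ball p.1 p.2 ∩ A) = ENNReal.ofReal η * μ (ball p.1 p.2)}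

theorem ae_exists_mem_criticalBalls {η : ℝ} (hη0 : 0 ≤ η) (hη1 : η < 1) {A : Set E}
    (hA1 : A ⊆ ball 0 1) (hAη : μ A ≤ ENNReal.ofReal η * μ (ball 0 1)) :
    ∀ᵐ x ∂μ, x ∈ A → ∃ p ∈ criticalBalls μ η A, x ∈ ball p.1 p.2 := by
  filter_upwards [ae_exists_ball_measure_inter_ge μ hη1 hA1] with x hx hxA
  obtain ⟨ρ, hρ, hx1, hdens⟩ := hx hxA
  obtain ⟨y, r, hr, hr1, hxy, hsub, heq⟩ := exists_ball_measure_inter_eq μ hη0 A hρ hx1 hdens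
    (by rwa [inter_eq_self_of_subset_right hA1])
  exact ⟨(y, r), ⟨hr, hr1, hsub, heq⟩, hxy⟩

theorem exists_countable_pairwiseDisjoint_measure_le_tsum (t : Set (E × ℝ)) {R : ℝ}
    (ht : ∀ p ∈ t, 0 < p.2 ∧ p.2 ≤ R) {A : Set E}
    (hA : ∀ᵐ x ∂μ, x ∈ A → ∃ p ∈ t, x ∈ ball p.1 p.2) :
    ∃ u ⊆ t, u.Countable ∧ u.PairwiseDisjoint (fun p => ball p.1 p.2) ∧
      μ A ≤ ENNReal.ofReal (4 ^ finrank ℝ E) * ∑' p : u, μ (ball p.1.1 p.1.2) := by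
  obtain ⟨u, hut, hdisj, hcover⟩ :=
    Vitali.exists_disjoint_subfamily_covering_enlargement_closedBall t Prod.fst Prod.snd R
      (fun p hp => (ht p hp).2) 4 (by norm_num)
  have hdisj' : u.PairwiseDisjoint fun p => ball p.1 p.2 :=
    hdisj.mono fun _ => ball_subset_closedBall
  have hu : u.Countable := hdisj'.countable_of_isOpen (fun _ _ => isOpen_ball)
    fun p hp => nonempty_ball.2 (ht p (hut hp)).1
  refine ⟨u, hut, hu, hdisj', ?_⟩
  calc μ A ≤ μ (⋃ p ∈ u, closedBall p.1 (4 * p.2)) := by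
        refine measure_mono_ae (hA.mono fun x hx hxA => ?_)
        obtain ⟨p, hp, hxp⟩ := hx hxA
        obtain ⟨q, hq, hpq⟩ := hcover p hp
        exact mem_biUnion hq (hpq (ball_subset_closedBall hxp))
    _ ≤ ∑' p : u, μ (closedBall p.1.1 (4 * p.1.2)) := measure_biUnion_le μ hu _
    _ = ∑' p : u, ENNReal.ofReal (4 ^ finrank ℝ E) * μ (ball p.1.1 p.1.2) := by
        refine tsum_congr fun p => ?_
        have hp := (ht p (hut p.2)).1
        rw [Measure.addHaar_closedBall μ _ (by positivity), Measure.addHaar_ball_of_pos μ _ hp,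
          mul_pow, ENNReal.ofReal_mul (by positivity), mul_assoc]
    _ = _ := ENNReal.tsum_mul_left

theorem ofReal_pow_sub_mul_le_measure_ball_diff {η ξ r : ℝ} (hη : 0 ≤ η) (hξ0 : 0 < ξ)
    (hξ1 : ξ ≤ 1) (hr : 0 < r) {A : Set E} {y : E}
    (hyr : μ (ball y r ∩ A) ≤ ENNReal.ofReal η * μ (ball y r)) :
    ENNReal.ofReal (ξ ^ finrank ℝ E - η) * μ (ball y r) ≤ μ (ball y (ξ * r) \ A) := by
  have hsmall : ball y (ξ * r) ⊆ ball y r := ball_subset_ball (by nlinarith)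
  rw [ENNReal.ofReal_sub _ hη, ENNReal.sub_mul fun _ _ => measure_ball_lt_top.ne,
    tsub_le_iff_right]
  calc ENNReal.ofReal (ξ ^ finrank ℝ E) * μ (ball y r) = μ (ball y (ξ * r)) := by
        rw [Measure.addHaar_ball_mul_of_pos μ y hξ0, Measure.addHaar_ball_center μ y]
    _ ≤ μ (ball y (ξ * r) ∩ A) + μ (ball y (ξ * r) \ A) := measure_le_inter_add_sdiff _ _ _
    _ ≤ μ (ball y (ξ * r) \ A) + ENNReal.ofReal η * μ (ball y r) := by
        rw [add_comm]
        exact add_le_add_right ((measure_mono (inter_subset_inter_left _ hsmall)).trans hyr) _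

theorem ofReal_div_mul_le_measure_biUnion_ball_diff {η ξ C : ℝ} (hη : 0 ≤ η) (hξ0 : 0 < ξ)
    (hξ1 : ξ ≤ 1) (hC : 0 < C) {A : Set E} (hA : MeasurableSet A) {u : Set (E × ℝ)}
    (hu : u.Countable) (hdisj : u.PairwiseDisjoint fun p => ball p.1 p.2)
    (hball : ∀ p ∈ u, 0 < p.2 ∧ μ (ball p.1 p.2 ∩ A) ≤ ENNReal.ofReal η * μ (ball p.1 p.2))
    (hμA : μ A ≤ ENNReal.ofReal C * ∑' p : u, μ (ball p.1.1 p.1.2)) :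
    ENNReal.ofReal ((ξ ^ finrank ℝ E - η) / C) * μ A ≤ μ (⋃ p ∈ u, ball p.1 (ξ * p.2) \ A) := by
  have hdisjξ : u.PairwiseDisjoint fun p => ball p.1 (ξ * p.2) \ A :=
    hdisj.mono_on fun p hp =>
      sdiff_subset.trans (ball_subset_ball (by nlinarith [(hball p hp).1]))
  rw [measure_biUnion hu hdisjξ fun _ _ => measurableSet_ball.diff hA]
  calc ENNReal.ofReal ((ξ ^ finrank ℝ E - η) / C) * μ A
      ≤ ENNReal.ofReal ((ξ ^ finrank ℝ E - η) / C) *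
          (ENNReal.ofReal C * ∑' p : u, μ (ball p.1.1 p.1.2)) := by gcongr
    _ = ∑' p : u, ENNReal.ofReal (ξ ^ finrank ℝ E - η) * μ (ball p.1.1 p.1.2) := by
        rw [← mul_assoc, ← ENNReal.ofReal_mul' hC.le, div_mul_cancel₀ _ hC.ne',
          ENNReal.tsum_mul_left]
    _ ≤ ∑' p : u, μ (ball p.1.1 (ξ * p.1.2) \ A) := ENNReal.tsum_le_tsum fun p =>
        ofReal_pow_sub_mul_le_measure_ball_diff μ hη hξ0 hξ1 (hball p p.2).1 (hball p p.2).2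

theorem measure_le_measure_inkSpread_inter {η ξ : ℝ} (hη : η < 1) (hξ : 0 < ξ) {A : Set E}
    (hA : A ⊆ ball 0 1) : μ A ≤ μ (inkSpread μ η ξ A ∩ A) := by
  refine measure_mono_ae ?_
  filter_upwards [ae_exists_ball_measure_inter_ge μ hη hA] with x hx hxA
  obtain ⟨ρ, hρ, hx1, hdens⟩ := hx hxA
  have hsub : ball x ρ ⊆ ball 0 1 := ball_subset_ball' (by linarith)
  exact ⟨ball_subset_inkSpread hρ hsub hdens (mem_ball_self (mul_pos hξ hρ)), hxA⟩

theorem exists_ofReal_one_add_mul_le_measure_inkSpread {η : ℝ} (hη0 : 0 ≤ η) (hη1 : η < 1) :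
    ∃ ξ ζ : ℝ, ξ ∈ Ioo (0 : ℝ) 1 ∧ 0 < ζ ∧ ∀ A : Set E, MeasurableSet A → A ⊆ ball 0 1 →
      μ A ≤ ENNReal.ofReal η * μ (ball 0 1) →
      ENNReal.ofReal (1 + ζ) * μ A ≤ μ (inkSpread μ η ξ A) := by
  obtain ⟨ξ, hξ, hηξ⟩ := exists_mem_Ioo_lt_pow hη1 (finrank ℝ E)
  have hζ : 0 < (ξ ^ finrank ℝ E - η) / 4 ^ finrank ℝ E := div_pos (sub_pos.2 hηξ) (by positivity)
  refine ⟨ξ, _, hξ, hζ, fun A hA hA1 hAη => ?_⟩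
  obtain ⟨u, hut, hu, hdisj, hμA⟩ :=
    exists_countable_pairwiseDisjoint_measure_le_tsum μ (criticalBalls μ η A)
      (fun p hp => ⟨hp.1, hp.2.1⟩) (ae_exists_mem_criticalBalls μ hη0 hη1 hA1 hAη)
  have hgain := ofReal_div_mul_le_measure_biUnion_ball_diff μ hη0 hξ.1 hξ.2.le
    (by positivity) hA hu hdisj (fun p hp => ⟨(hut hp).1, (hut hp).2.2.2.le⟩) hμA
  have hspread : (⋃ p ∈ u, ball p.1 (ξ * p.2) \ A) ⊆ inkSpread μ η ξ A \ A :=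
    iUnion₂_subset fun p hp => sdiff_subset_sdiff_left
      (ball_subset_inkSpread (hut hp).1 (hut hp).2.2.1 (hut hp).2.2.2.ge)
  calc ENNReal.ofReal (1 + (ξ ^ finrank ℝ E - η) / 4 ^ finrank ℝ E) * μ A
      = μ A + ENNReal.ofReal ((ξ ^ finrank ℝ E - η) / 4 ^ finrank ℝ E) * μ A := by
        rw [ENNReal.ofReal_add zero_le_one hζ.le, ENNReal.ofReal_one, add_mul, one_mul]
    _ ≤ μ (inkSpread μ η ξ A ∩ A) + μ (inkSpread μ η ξ A \ A) :=
        add_le_add (measure_le_measure_inkSpread_inter μ hη1 hξ.1 hA1)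
          (hgain.trans (measure_mono hspread))
    _ = μ (inkSpread μ η ξ A) := measure_inter_add_sdiff _ hA

end AddHaar

theorem propagating_ink_spots_balls_general
    (n : ℕ) (η : ℝ) (hη0 : 0 < η) (hη1 : η < 1) :
    ∃ ξ ζ : ℝ, ξ ∈ Set.Ioo (0 : ℝ) 1 ∧ 0 < ζ ∧
      ∀ A : Set (EuclideanSpace ℝ (Fin n)),
        MeasurableSet A →
        A ⊆ Metric.ball 0 1 →
        volume A ≤ ENNReal.ofReal η * volume (Metric.ball (0 : EuclideanSpace ℝ (Fin n)) 1) →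
        ENNReal.ofReal (1 + ζ) * volume A ≤
          volume (⋃ (x : EuclideanSpace ℝ (Fin n)) (ρ : ℝ)
            (_ : 0 < ρ ∧ Metric.ball x ρ ⊆ Metric.ball 0 1 ∧
              ENNReal.ofReal η * volume (Metric.ball x ρ) ≤ volume (Metric.ball x ρ ∩ A)),
            Metric.ball x (ξ * ρ)) :=
  exists_ofReal_one_add_mul_le_measure_inkSpread volume hη0.le hη1

/-- Krylov's propagating ink spots lemma (balls). -/
theorem propagating_ink_spots_balls
    (n : ℕ) (hn : 1 ≤ n) (η : ℝ) (hη0 : 0 < η) (hη1 : η < 1) :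
    ∃ ξ ζ : ℝ, ξ ∈ Set.Ioo (0 : ℝ) 1 ∧ 0 < ζ ∧
      ∀ A : Set (EuclideanSpace ℝ (Fin n)),
        MeasurableSet A →
        A ⊆ Metric.ball 0 1 →
        volume A ≤ ENNReal.ofReal η * volume (Metric.ball (0 : EuclideanSpace ℝ (Fin n)) 1) →
        ENNReal.ofReal (1 + ζ) * volume A ≤
          volume (⋃ (x : EuclideanSpace ℝ (Fin n)) (ρ : ℝ)
            (_ : 0 < ρ ∧ Metric.ball x ρ ⊆ Metric.ball 0 1 ∧
              ENNReal.ofReal η * volume (Metric.ball x ρ) ≤ volume (Metric.ball x ρ ∩ A)),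
            Metric.ball x (ξ * ρ)) :=
  propagating_ink_spots_balls_general n η hη0 hη1
end

section
/- Propagating ink spots lemma, cube version. There exists a constant c₀ = c₀(n) ∈ (0,1), depending only on the dimension n, such that the following holds. Let Q = (0,1)ⁿ be the open unit cube, let α ∈ (0,1), and let A ⊆ B ⊆ Q be Lebesgue-measurable sets with |A| ≤ (1−α)·|Q|. Suppose that for every open axis-parallel subcube Q' ⊆ Q (i.e. Q' a translate of (0,ρ)ⁿ for some ρ > 0 contained in Q): if |Q' ∩ A| ≥ (1−α)·|Q'| then Q' ⊆ B. Then |A| ≤ (1−c₀·α)·|B|. -/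
open MeasureTheory
open scoped ENNReal

/-- An open axis-parallel cube with lower corner `c` and side `ρ`,
i.e. a translate of `(0,ρ)ⁿ`. -/
def openCube (n : ℕ) (c : EuclideanSpace ℝ (Fin n)) (ρ : ℝ) :
    Set (EuclideanSpace ℝ (Fin n)) :=
  {x | ∀ i : Fin n, c i < x i ∧ x i < c i + ρ}

/-! At almost every point `x` of `A` the density of `A` in small cubes centred at `x` tends to `1`
(Lebesgue). Growing such a cube continuously into `Q`, where the density of `A` is at most
`1 - α`, the intermediate value theorem yields a cube `C x ∋ x` inside `Q` in which `A` has
density exactly `1 - α`; by hypothesis `C x ⊆ B`, and `|C x \ A| = α |C x|`. A disjoint Vitali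
subfamily of the `C x` whose fivefold enlargements cover almost all of `A` then gives
`α |A| ≤ 5ⁿ |B \ A|`, that is `|A| ≤ (1 - α / (5ⁿ + 1)) |B|`. -/

open Metric Set Filter
open scoped Topology Pointwise

theorem ContinuousOn.of_dist_le {X Y Z : Type*} [TopologicalSpace X] [PseudoMetricSpace Y]
    [PseudoMetricSpace Z] {f : X → Y} {g : X → Z} {s : Set X} (hg : ContinuousOn g s)
    (h : ∀ a ∈ s, ∀ b ∈ s, dist (f a) (f b) ≤ dist (g a) (g b)) : ContinuousOn f s := by
  intro x hx
  rw [ContinuousWithinAt, tendsto_iff_dist_tendsto_zero]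
  refine squeeze_zero' (Eventually.of_forall fun _ => dist_nonneg)
    (eventually_mem_nhdsWithin.mono fun y hy => h y hy x hx) ?_
  exact (tendsto_iff_dist_tendsto_zero).1 (hg x hx)

theorem ContinuousOn.measure_inter {X : Type*} [MeasurableSpace X] {μ : Measure X}
    {C : ℝ → Set X} {S : Set ℝ} (hC : MonotoneOn C S)
    (hCm : ∀ s ∈ S, NullMeasurableSet (C s) μ) (hfin : ∀ s ∈ S, μ (C s) ≠ ∞)
    (hcont : ContinuousOn (fun s => μ (C s)) S) (A : Set X) :
    ContinuousOn (fun s => μ (C s ∩ A)) S := by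
  have hfin' : ∀ s ∈ S, μ (C s ∩ A) ≠ ∞ := fun s hs =>
    measure_ne_top_of_subset inter_subset_left (hfin s hs)
  have step : ∀ s ∈ S, ∀ t ∈ S, s ≤ t →
      μ (C t ∩ A) + μ (C s) ≤ μ (C s ∩ A) + μ (C t) := by
    intro s hs t ht hst
    have hsplit : μ (C s) + μ (C t \ C s) = μ (C t) := by
      rw [measure_add_sdiff (hCm s hs), union_eq_self_of_subset_left (hC hs ht hst)]
    calc μ (C t ∩ A) + μ (C s) ≤ μ (C s ∩ A ∪ C t \ C s) + μ (C s) := by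
          gcongr
          intro y ⟨hyt, hyA⟩
          by_cases hys : y ∈ C s
          exacts [Or.inl ⟨hys, hyA⟩, Or.inr ⟨hyt, hys⟩]
      _ ≤ μ (C s ∩ A) + (μ (C s) + μ (C t \ C s)) := by
          rw [add_comm (μ (C s)), ← add_assoc]; gcongr; exact measure_union_le _ _
      _ = μ (C s ∩ A) + μ (C t) := by rw [hsplit]
  have hreal : ContinuousOn (fun s => (μ (C s ∩ A)).toReal) S := by
    refine ContinuousOn.of_dist_le (g := fun s => (μ (C s)).toReal)
      (ENNReal.continuousOn_toReal.comp hcont fun s hs => hfin s hs) ?_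
    have key : ∀ s ∈ S, ∀ t ∈ S, s ≤ t →
        dist (μ (C s ∩ A)).toReal (μ (C t ∩ A)).toReal ≤
          dist (μ (C s)).toReal (μ (C t)).toReal := by
      intro s hs t ht hst
      have h1 := (ENNReal.toReal_le_toReal (ENNReal.add_ne_top.2 ⟨hfin' t ht, hfin s hs⟩)
        (ENNReal.add_ne_top.2 ⟨hfin' s hs, hfin t ht⟩)).2 (step s hs t ht hst)
      have h2 := ENNReal.toReal_mono (hfin' t ht) (measure_mono (inter_subset_inter_left A
        (hC hs ht hst)))
      rw [ENNReal.toReal_add (hfin' t ht) (hfin s hs),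
        ENNReal.toReal_add (hfin' s hs) (hfin t ht)] at h1
      rw [Real.dist_eq, Real.dist_eq, abs_sub_comm, abs_of_nonneg (by linarith),
        abs_sub_comm, abs_of_nonneg (by linarith)]
      linarith
    intro s hs t ht
    rcases le_total s t with hst | hts
    · exact key s hs t ht hst
    · rw [dist_comm, dist_comm (μ (C s)).toReal]; exact key t ht s hs hts
  exact (ENNReal.continuous_ofReal.comp_continuousOn hreal).congr fun s hs =>
    (ENNReal.ofReal_toReal (hfin' s hs)).symm

section Measure

variable {X : Type*} [MeasurableSpace X] {μ : Measure X} {A B : Set X}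

theorem mul_measure_le_mul_measure_diff_of_pairwiseDisjoint {ι : Type*} {C : ι → Set X}
    {u : Set ι} (hA : MeasurableSet A) (hu : u.Countable) (hdisj : u.PairwiseDisjoint C)
    (hC : ∀ i ∈ u, MeasurableSet (C i)) (hCB : ∀ i ∈ u, C i ⊆ B) {a K : ℝ≥0∞}
    (hCA : ∀ i ∈ u, a * μ (C i) ≤ μ (C i \ A)) (hcover : μ A ≤ K * ∑' i : u, μ (C i)) :
    a * μ A ≤ K * μ (B \ A) :=
  calc a * μ A ≤ a * (K * ∑' i : u, μ (C i)) := by gcongr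
    _ = K * ∑' i : u, a * μ (C i) := by rw [ENNReal.tsum_mul_left]; ring
    _ ≤ K * ∑' i : u, μ (C i \ A) := by gcongr with i; exact hCA i i.2
    _ = K * μ (⋃ i ∈ u, C i \ A) := by
        rw [measure_biUnion hu (hdisj.mono fun i => sdiff_subset) fun i hi => (hC i hi).diff hA]
    _ ≤ K * μ (B \ A) := by
        gcongr; exact iUnion₂_subset fun i hi => sdiff_subset_sdiff_left (hCB i hi)

theorem measure_le_one_sub_mul_measure (hAB : A ⊆ B) (hA : NullMeasurableSet A μ)
    (hB : μ B ≠ ∞) {α K : ℝ} (hα₀ : 0 ≤ α) (hα₁ : α ≤ 1) (hK : 0 ≤ K)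
    (h : ENNReal.ofReal α * μ A ≤ ENNReal.ofReal K * μ (B \ A)) :
    μ A ≤ ENNReal.ofReal (1 - (K + 1)⁻¹ * α) * μ B := by
  have hAfin : μ A ≠ ∞ := measure_ne_top_of_subset hAB hB
  have hDfin : μ (B \ A) ≠ ∞ := measure_ne_top_of_subset sdiff_subset hB
  have hsplit : μ B = μ A + μ (B \ A) := by
    rw [measure_add_sdiff hA, union_eq_right.2 hAB]
  have hreal : α * (μ A).toReal ≤ K * (μ (B \ A)).toReal := by
    simpa [ENNReal.toReal_mul, hα₀, hK] using
      ENNReal.toReal_mono (ENNReal.mul_ne_top ENNReal.ofReal_ne_top hDfin) h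
  have hd := (μ (B \ A)).toReal_nonneg
  have hK₁ : 0 < K + 1 := by linarith
  rw [hsplit, ← ENNReal.ofReal_toReal hAfin, ← ENNReal.ofReal_toReal hDfin,
    ← ENNReal.ofReal_add ENNReal.toReal_nonneg hd, ← ENNReal.ofReal_mul
      (by nlinarith [inv_mul_le_one_of_le₀ (by linarith : α ≤ K + 1) hK₁.le])]
  refine ENNReal.ofReal_le_ofReal ?_
  have key : (1 - (K + 1)⁻¹ * α) * ((μ A).toReal + (μ (B \ A)).toReal) =
      (μ A).toReal + ((K + 1) * (μ (B \ A)).toReal - α * ((μ A).toReal + (μ (B \ A)).toReal))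
        / (K + 1) := by
    field_simp; ring
  rw [key]
  -- The numerator is nonnegative since `α μ A ≤ K μ (B \ A)` and `α μ (B \ A) ≤ μ (B \ A)`.
  exact le_add_of_nonneg_right (div_nonneg (by nlinarith) hK₁.le)

theorem measure_sdiff_eq_of_measure_inter_eq {C : Set X} (hA : MeasurableSet A) (hC : μ C ≠ ∞)
    {α : ℝ} (hα₀ : 0 ≤ α) (hα₁ : α ≤ 1) (h : μ (C ∩ A) = ENNReal.ofReal (1 - α) * μ C) :
    μ (C \ A) = ENNReal.ofReal α * μ C := by
  have hsplit : ENNReal.ofReal (1 - α) * μ C + ENNReal.ofReal α * μ C = μ C := by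
    rw [← add_mul, ← ENNReal.ofReal_add (by linarith) hα₀, sub_add_cancel, ENNReal.ofReal_one,
      one_mul]
  refine (ENNReal.add_right_inj (ENNReal.mul_ne_top (ENNReal.ofReal_ne_top (r := 1 - α)) hC)).1 ?_
  rw [← h, measure_inter_add_sdiff C hA, h, hsplit]

end Measure

section Cubes

variable {n : ℕ}

theorem openCube_eq_preimage (c : EuclideanSpace ℝ (Fin n)) (ρ : ℝ) :
    openCube n c ρ = (MeasurableEquiv.toLp 2 (Fin n → ℝ)).symm ⁻¹'
      (Set.univ.pi fun i => Ioo (c i) (c i + ρ)) := by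
  ext x
  simp [openCube, MeasurableEquiv.coe_toLp_symm, Set.mem_pi]

theorem volume_openCube (c : EuclideanSpace ℝ (Fin n)) {ρ : ℝ} (hρ : 0 ≤ ρ) :
    volume (openCube n c ρ) = ENNReal.ofReal (ρ ^ n) := by
  rw [openCube_eq_preimage,
    (EuclideanSpace.volume_preserving_symm_measurableEquiv_toLp (Fin n)).measure_preimage
      (MeasurableSet.univ_pi fun i => measurableSet_Ioo).nullMeasurableSet, volume_pi_pi]
  simp [Real.volume_Ioo, ← ENNReal.ofReal_pow hρ]

theorem isOpen_openCube (c : EuclideanSpace ℝ (Fin n)) (ρ : ℝ) : IsOpen (openCube n c ρ) := by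
  rw [openCube_eq_preimage]
  exact (isOpen_set_pi finite_univ fun i _ => isOpen_Ioo).preimage
    (PiLp.continuous_ofLp 2 _)

theorem measurableSet_openCube (c : EuclideanSpace ℝ (Fin n)) (ρ : ℝ) :
    MeasurableSet (openCube n c ρ) :=
  (isOpen_openCube c ρ).measurableSet

theorem singleton_add_smul_openCube (x c : EuclideanSpace ℝ (Fin n)) {r : ℝ} (hr : 0 < r)
    (ρ : ℝ) : {x} + r • openCube n c ρ = openCube n (x + r • c) (r * ρ) := by
  ext y
  rw [singleton_add, ← image_smul, image_image]
  constructor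
  · rintro ⟨z, hz, rfl⟩ i
    have := hz i
    simp only [PiLp.add_apply, PiLp.smul_apply, smul_eq_mul]
    constructor <;> nlinarith
  · intro hy
    refine ⟨r⁻¹ • (y - x), fun i => ?_, by simp [smul_smul, hr.ne']⟩
    have := hy i
    simp only [PiLp.add_apply, PiLp.smul_apply, PiLp.sub_apply, smul_eq_mul] at this ⊢
    constructor
    · rw [lt_inv_mul_iff₀ hr]; linarith
    · rw [inv_mul_lt_iff₀ hr]; linarith

theorem openCube_subset_openCube_of_inter_nonempty {c₁ c₂ : EuclideanSpace ℝ (Fin n)}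
    {ρ₁ ρ₂ τ : ℝ} (hne : (openCube n c₁ ρ₁ ∩ openCube n c₂ ρ₂).Nonempty) (hle : ρ₁ ≤ τ * ρ₂) :
    openCube n c₁ ρ₁ ⊆ openCube n (c₂ - (τ * ρ₂) • WithLp.toLp 2 1) ((2 * τ + 1) * ρ₂) := by
  obtain ⟨z, hz₁, hz₂⟩ := hne
  intro y hy i
  have := hy i; have := hz₁ i; have := hz₂ i
  simp only [PiLp.sub_apply, PiLp.smul_apply, smul_eq_mul, Pi.one_apply]
  constructor <;> nlinarith

theorem exists_openCube_inter_eq {c₀ c₁ : EuclideanSpace ℝ (Fin n)} {ρ₀ ρ₁ : ℝ}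
    (hρ₀ : 0 ≤ ρ₀) (hρ : ρ₀ ≤ ρ₁) (hc : ∀ i, c₁ i ≤ c₀ i) (hcρ : ∀ i, c₀ i + ρ₀ ≤ c₁ i + ρ₁)
    {A : Set (EuclideanSpace ℝ (Fin n))} {θ : ℝ≥0∞} (hθ : θ ≠ ∞)
    (h₀ : θ * volume (openCube n c₀ ρ₀) ≤ volume (openCube n c₀ ρ₀ ∩ A))
    (h₁ : volume (openCube n c₁ ρ₁ ∩ A) ≤ θ * volume (openCube n c₁ ρ₁)) :
    ∃ c ρ, ρ ∈ Icc ρ₀ ρ₁ ∧ openCube n c₀ ρ₀ ⊆ openCube n c ρ ∧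
      openCube n c ρ ⊆ openCube n c₁ ρ₁ ∧
      volume (openCube n c ρ ∩ A) = θ * volume (openCube n c ρ) := by
  set C : ℝ → Set (EuclideanSpace ℝ (Fin n)) :=
    fun s => openCube n (c₀ + s • (c₁ - c₀)) (ρ₀ + s * (ρ₁ - ρ₀)) with hC
  have hmono : Monotone C := by
    intro s t hst y hy i
    have := hy i; have := hc i; have := hcρ i
    simp only [hC, PiLp.add_apply, PiLp.smul_apply, PiLp.sub_apply, smul_eq_mul] at *
    constructor <;> nlinarith
  have hvol : ∀ s ∈ Icc (0 : ℝ) 1, volume (C s) = ENNReal.ofReal ((ρ₀ + s * (ρ₁ - ρ₀)) ^ n) :=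
    fun s hs => volume_openCube _ (by nlinarith [hs.1])
  have hcont : ContinuousOn (fun s => volume (C s)) (Icc 0 1) :=
    (ENNReal.continuous_ofReal.comp (by fun_prop)).continuousOn.congr hvol
  have hC₀ : C 0 = openCube n c₀ ρ₀ := by simp [hC]
  have hC₁ : C 1 = openCube n c₁ ρ₁ := by simp [hC]
  have hcontA : ContinuousOn (fun s => volume (C s ∩ A)) (Icc 0 1) :=
    hcont.measure_inter (hmono.monotoneOn _)
      (fun s _ => (measurableSet_openCube _ _).nullMeasurableSet)
      (fun s hs => hvol s hs ▸ ENNReal.ofReal_ne_top) A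
  obtain ⟨s, hs, heq⟩ := isPreconnected_Icc.intermediate_value₂ (left_mem_Icc.2 zero_le_one)
    (right_mem_Icc.2 zero_le_one) ((ENNReal.continuous_const_mul hθ).comp_continuousOn hcont)
    hcontA
    (show θ * volume (C 0) ≤ volume (C 0 ∩ A) by rwa [hC₀])
    (show volume (C 1 ∩ A) ≤ θ * volume (C 1) by rwa [hC₁])
  refine ⟨_, _, ⟨?_, ?_⟩, hC₀ ▸ hmono hs.1, hC₁ ▸ hmono hs.2, heq.symm⟩ <;> nlinarith [hs.1, hs.2]

theorem eventually_mul_volume_openCube_le_inter (c : EuclideanSpace ℝ (Fin n))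
    {A : Set (EuclideanSpace ℝ (Fin n))} {x : EuclideanSpace ℝ (Fin n)}
    (hx : Tendsto (fun r => volume (A ∩ closedBall x r) / volume (closedBall x r)) (𝓝[>] 0)
      (𝓝 1)) {θ : ℝ≥0∞} (hθ : θ < 1) :
    ∀ᶠ r in 𝓝[>] 0,
      θ * volume (openCube n (x + r • c) r) ≤ volume (openCube n (x + r • c) r ∩ A) := by
  have hvol : volume (openCube n c 1) = 1 := by simp [volume_openCube c zero_le_one]
  have h := Measure.tendsto_addHaar_inter_smul_one_of_density_one volume A x hx (openCube n c 1)
    (measurableSet_openCube c 1) (by simp [hvol]) (by simp [hvol])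
  filter_upwards [h.eventually (lt_mem_nhds hθ), self_mem_nhdsWithin] with r hr (hr0 : 0 < r)
  rw [singleton_add_smul_openCube x c hr0, mul_one] at hr
  rw [inter_comm]
  refine ((ENNReal.lt_div_iff_mul_lt (Or.inl ?_) (Or.inl ?_)).1 hr).le
  · simp [volume_openCube _ hr0.le, pow_pos hr0]
  · simp [volume_openCube _ hr0.le]

theorem exists_openCube_mem_inter_eq {c₁ x : EuclideanSpace ℝ (Fin n)} {ρ₁ : ℝ} (hρ₁ : 0 < ρ₁)
    (hx₁ : x ∈ openCube n c₁ ρ₁) {A : Set (EuclideanSpace ℝ (Fin n))}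
    (hx : Tendsto (fun r => volume (A ∩ closedBall x r) / volume (closedBall x r)) (𝓝[>] 0)
      (𝓝 1)) {θ : ℝ≥0∞} (hθ : θ < 1)
    (hA : volume (openCube n c₁ ρ₁ ∩ A) ≤ θ * volume (openCube n c₁ ρ₁)) :
    ∃ c ρ, 0 < ρ ∧ ρ ≤ ρ₁ ∧ x ∈ openCube n c ρ ∧ openCube n c ρ ⊆ openCube n c₁ ρ₁ ∧
      volume (openCube n c ρ ∩ A) = θ * volume (openCube n c ρ) := by
  set c : EuclideanSpace ℝ (Fin n) := -(2⁻¹ : ℝ) • WithLp.toLp 2 1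
  have hcoord : ∀ r i, (x + r • c) i = x i - r / 2 := fun r i => by
    simp [c]; ring
  have hlow : ∀ i, ∀ᶠ r in 𝓝[>] (0 : ℝ), r < 2 * (x i - c₁ i) := fun i =>
    nhdsWithin_le_nhds (gt_mem_nhds (by linarith [(hx₁ i).1]))
  have hup : ∀ i, ∀ᶠ r in 𝓝[>] (0 : ℝ), r < 2 * (c₁ i + ρ₁ - x i) := fun i =>
    nhdsWithin_le_nhds (gt_mem_nhds (by linarith [(hx₁ i).2]))
  have hsmall : ∀ᶠ r in 𝓝[>] (0 : ℝ), r < ρ₁ := nhdsWithin_le_nhds (gt_mem_nhds hρ₁)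
  obtain ⟨r, hr, hlow, hup, hrρ, hr0⟩ := (eventually_mul_volume_openCube_le_inter c hx hθ |>.and
    <| (eventually_all.2 hlow).and <| (eventually_all.2 hup).and <|
      hsmall.and self_mem_nhdsWithin).exists
  obtain ⟨c', ρ, hρ, hsub₀, hsub₁, heq⟩ := exists_openCube_inter_eq hr0.le hrρ.le
    (fun i => by rw [hcoord]; linarith [hlow i]) (fun i => by rw [hcoord]; linarith [hup i])
    hθ.ne_top hr hA
  refine ⟨c', ρ, hr0.trans_le hρ.1, hρ.2, hsub₀ fun i => ?_, hsub₁, heq⟩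
  rw [hcoord]
  constructor <;> linarith

theorem openCube_nonempty (c : EuclideanSpace ℝ (Fin n)) {ρ : ℝ} (hρ : 0 < ρ) :
    (openCube n c ρ).Nonempty :=
  ⟨c + (ρ / 2) • WithLp.toLp 2 1, fun i => by simp [hρ]⟩

theorem exists_pairwiseDisjoint_volume_biUnion_openCube_le {ι : Type*} (s : Set ι)
    (c : ι → EuclideanSpace ℝ (Fin n)) (ρ : ι → ℝ) (hρ : ∀ i ∈ s, 0 < ρ i) {R : ℝ}
    (hR : ∀ i ∈ s, ρ i ≤ R) :
    ∃ u ⊆ s, u.Countable ∧ u.PairwiseDisjoint (fun i => openCube n (c i) (ρ i)) ∧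
      volume (⋃ i ∈ s, openCube n (c i) (ρ i)) ≤
        5 ^ n * ∑' i : u, volume (openCube n (c i) (ρ i)) := by
  obtain ⟨u, hus, hdisj, hcover⟩ := Vitali.exists_disjoint_subfamily_covering_enlargement
    (fun i => openCube n (c i) (ρ i)) s ρ 2 one_lt_two (fun i hi => (hρ i hi).le) R hR
    (fun i hi => openCube_nonempty _ (hρ i hi))
  have hu : u.Countable := hdisj.countable_of_isOpen (fun i _ => isOpen_openCube _ _)
    (fun i hi => openCube_nonempty _ (hρ i (hus hi)))
  refine ⟨u, hus, hu, hdisj, ?_⟩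
  set D : ι → Set (EuclideanSpace ℝ (Fin n)) :=
    fun j => openCube n (c j - (2 * ρ j) • WithLp.toLp 2 1) ((2 * 2 + 1) * ρ j)
  calc volume (⋃ i ∈ s, openCube n (c i) (ρ i)) ≤ volume (⋃ j ∈ u, D j) :=
        measure_mono <| iUnion₂_subset fun i hi => by
          obtain ⟨j, hj, hne, hle⟩ := hcover i hi
          exact (openCube_subset_openCube_of_inter_nonempty hne hle).trans
            (subset_biUnion_of_mem (u := D) hj)
    _ ≤ ∑' j : u, volume (D j) := measure_biUnion_le _ hu _
    _ = ∑' j : u, 5 ^ n * volume (openCube n (c j) (ρ j)) := by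
        refine tsum_congr fun j => ?_
        have hj := (hρ j (hus j.2)).le
        rw [volume_openCube _ hj, volume_openCube _ (by positivity), mul_pow,
          ENNReal.ofReal_mul (by positivity), ENNReal.ofReal_pow (by norm_num)]
        norm_num
    _ = 5 ^ n * ∑' j : u, volume (openCube n (c j) (ρ j)) := ENNReal.tsum_mul_left

end Cubes

theorem propagating_ink_spots_cubes_general
    (n : ℕ) :
    ∃ c₀ : ℝ, c₀ ∈ Set.Ioo (0 : ℝ) 1 ∧
      ∀ α : ℝ, α ∈ Set.Ioo (0 : ℝ) 1 →
        ∀ A B : Set (EuclideanSpace ℝ (Fin n)),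
          MeasurableSet A → MeasurableSet B →
          A ⊆ B → B ⊆ openCube n 0 1 →
          volume A ≤ ENNReal.ofReal (1 - α) * volume (openCube n 0 1) →
          (∀ (c : EuclideanSpace ℝ (Fin n)) (ρ : ℝ), 0 < ρ →
            openCube n c ρ ⊆ openCube n 0 1 →
            ENNReal.ofReal (1 - α) * volume (openCube n c ρ) ≤ volume (openCube n c ρ ∩ A) →
            openCube n c ρ ⊆ B) →
          volume A ≤ ENNReal.ofReal (1 - c₀ * α) * volume B := by
  refine ⟨((5 : ℝ) ^ n + 1)⁻¹,
    ⟨by positivity, inv_lt_one_of_one_lt₀ (lt_add_of_pos_left 1 (by positivity))⟩, ?_⟩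
  rintro α ⟨hα₀, hα₁⟩ A B hA - hAB hBQ hAQ hyp
  have hQ : volume (openCube n 0 1) = 1 := by simp [volume_openCube _ zero_le_one]
  set s := {x | x ∈ A ∧ Tendsto (fun r => volume (A ∩ closedBall x r) / volume (closedBall x r))
    (𝓝[>] 0) (𝓝 1)}
  have hgood : ∀ x ∈ s, ∃ c ρ, 0 < ρ ∧ ρ ≤ 1 ∧ x ∈ openCube n c ρ ∧
      openCube n c ρ ⊆ openCube n 0 1 ∧
      volume (openCube n c ρ ∩ A) = ENNReal.ofReal (1 - α) * volume (openCube n c ρ) :=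
    fun x hx => exists_openCube_mem_inter_eq one_pos (hBQ (hAB hx.1)) hx.2
      (ENNReal.ofReal_lt_one.2 (by linarith)) (by rwa [inter_eq_right.2 (hAB.trans hBQ)])
  choose! c ρ hρ₀ hρ₁ hxc hcQ hcA using hgood
  obtain ⟨u, hus, hu, hdisj, hcover⟩ :=
    exists_pairwiseDisjoint_volume_biUnion_openCube_le s c ρ hρ₀ hρ₁
  have hAs : volume A ≤ volume (⋃ x ∈ s, openCube n (c x) (ρ x)) := by
    refine measure_mono_ae ?_
    filter_upwards [(ae_restrict_iff' hA).1 (Besicovitch.ae_tendsto_measure_inter_div volume A)]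
      with x hx hxA
    exact mem_biUnion ⟨hxA, hx hxA⟩ (hxc x ⟨hxA, hx hxA⟩)
  refine measure_le_one_sub_mul_measure hAB hA.nullMeasurableSet
    (measure_ne_top_of_subset hBQ (by simp [hQ])) hα₀.le hα₁.le (by positivity) ?_
  rw [ENNReal.ofReal_pow (by norm_num), ENNReal.ofReal_ofNat]
  refine mul_measure_le_mul_measure_diff_of_pairwiseDisjoint hA hu hdisj
    (fun x _ => measurableSet_openCube _ _)
    (fun x hx => hyp _ _ (hρ₀ x (hus hx)) (hcQ x (hus hx)) (hcA x (hus hx)).ge)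
    (fun x hx => (measure_sdiff_eq_of_measure_inter_eq hA ?_ hα₀.le hα₁.le (hcA x (hus hx))).ge)
    (hAs.trans hcover)
  simp [volume_openCube _ (hρ₀ x (hus hx)).le]

/-- Propagating ink spots lemma, cube version. -/
theorem propagating_ink_spots_cubes
    (n : ℕ) (hn : 1 ≤ n) :
    ∃ c₀ : ℝ, c₀ ∈ Set.Ioo (0 : ℝ) 1 ∧
      ∀ α : ℝ, α ∈ Set.Ioo (0 : ℝ) 1 →
        ∀ A B : Set (EuclideanSpace ℝ (Fin n)),
          MeasurableSet A → MeasurableSet B →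
          A ⊆ B → B ⊆ openCube n 0 1 →
          volume A ≤ ENNReal.ofReal (1 - α) * volume (openCube n 0 1) →
          (∀ (c : EuclideanSpace ℝ (Fin n)) (ρ : ℝ), 0 < ρ →
            openCube n c ρ ⊆ openCube n 0 1 →
            ENNReal.ofReal (1 - α) * volume (openCube n c ρ) ≤ volume (openCube n c ρ ∩ A) →
            openCube n c ρ ⊆ B) →
          volume A ≤ ENNReal.ofReal (1 - c₀ * α) * volume B :=
  propagating_ink_spots_cubes_general n
end
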